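/- arXiv:1709.01840 — 3 statements merged into one kernel-verified Lean document; each statement's English description precedes it below -/
import Mathlib

section
/- Let n ≥ 2 be an integer and let T ∈ Mₙ(ℂ). If T has property (CN) or T has property (CR), then T is normal, i.e. T·Tᴴ = Tᴴ·T. -/
/-!
Both (CN) and (CR) say that `P T (1 - P) = 0` whenever `(1 - P) T P = 0`, because an operator
of norm zero or of rank zero vanishes: every invariant subspace of `T` is reducing. The span of
the eigenvectors of `T` is then invariant together with its orthogonal complement, which contains
no eigenvector and so is zero. Each eigenspace of `T` is invariant under `Tᴴ`, so `T Tᴴ` and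
`Tᴴ T` agree on every eigenspace, hence everywhere.
-/

open Matrix

noncomputable def opN {n : ℕ} (M : Matrix (Fin n) (Fin n) ℂ) : ℝ :=
  ‖Matrix.toEuclideanCLM (𝕜 := ℂ) M‖

def HasCN {n : ℕ} (T : Matrix (Fin n) (Fin n) ℂ) : Prop :=
  ∀ P : Matrix (Fin n) (Fin n) ℂ, P * P = P → Pᴴ = P →
    opN (P * T * (1 - P)) = opN ((1 - P) * T * P)

def HasCR {n : ℕ} (T : Matrix (Fin n) (Fin n) ℂ) : Prop :=
  ∀ P : Matrix (Fin n) (Fin n) ℂ, P * P = P → Pᴴ = P →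
    (P * T * (1 - P)).rank = ((1 - P) * T * P).rank

open Module End Submodule

theorem Module.End.iSup_eigenspace_mem_invtSubmodule {R M : Type*} [CommRing R] [AddCommGroup M]
    [Module R M] (f : Module.End R M) : ⨆ μ, f.eigenspace μ ∈ f.invtSubmodule := by
  rw [mem_invtSubmodule_iff_map_le, Submodule.map_iSup]
  exact iSup_mono fun μ => (mem_invtSubmodule_iff_map_le f).mp (eigenspace_mem_invtSubmodule f μ)

section InnerProductSpace

variable {E : Type*} [NormedAddCommGroup E] [InnerProductSpace ℂ E]

namespace Module.End

variable [FiniteDimensional ℂ E] {f : Module.End ℂ E}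

theorem iSup_eigenspace_eq_top_of_orthogonal_mem_invtSubmodule
    (h : ∀ U ∈ f.invtSubmodule, Uᗮ ∈ f.invtSubmodule) : ⨆ μ, f.eigenspace μ = ⊤ := by
  set V := ⨆ μ, f.eigenspace μ
  have hV : ∀ x ∈ Vᗮ, f x ∈ Vᗮ := h V (iSup_eigenspace_mem_invtSubmodule f)
  rw [← orthogonal_eq_bot_iff, ← subsingleton_iff_eq_bot]
  by_contra hne
  rw [not_subsingleton_iff_nontrivial] at hne
  obtain ⟨μ, hμ⟩ := exists_eigenvalue (f.restrict hV)
  exact hasEigenvalue_iff.mp hμ <| eigenspace_restrict_eq_bot hV <|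
    ((isOrtho_orthogonal_right V).mono_left (le_iSup _ μ)).disjoint

theorem adjoint_mul_self_eq_mul_adjoint_of_orthogonal_mem_invtSubmodule
    (h : ∀ U ∈ f.invtSubmodule, Uᗮ ∈ f.invtSubmodule) :
    f.adjoint * f = f * f.adjoint := by
  rw [← LinearMap.eqLocus_eq_top, eq_top_iff,
    ← iSup_eigenspace_eq_top_of_orthogonal_mem_invtSubmodule h, iSup_le_iff]
  intro μ x hx
  have hadj : f.eigenspace μ ∈ invtSubmodule f.adjoint :=
    mem_invtSubmodule_adjoint_iff.mpr (h _ (eigenspace_mem_invtSubmodule f μ))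
  have hfx : f x = μ • x := mem_eigenspace_iff.mp hx
  have hfx' : f (f.adjoint x) = μ • f.adjoint x := mem_eigenspace_iff.mp (hadj hx)
  simp [LinearMap.mem_eqLocus, hfx, hfx']

end Module.End

end InnerProductSpace

/-- For a star projection `p`, `(1 - p) * a * p = 0` says that the range of `p` is invariant
under `a`, and `p * a * (1 - p) = 0` that its orthogonal complement is. -/
def IsReductive {A : Type*} [Ring A] [Star A] (a : A) : Prop :=
  ∀ p : A, IsStarProjection p → (1 - p) * a * p = 0 → p * a * (1 - p) = 0

namespace IsReductive

theorem map {R A B : Type*} [CommSemiring R] [Ring A] [Ring B] [Algebra R A]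
    [Algebra R B] [Star A] [Star B] {a : A} (ha : IsReductive a) (φ : A ≃⋆ₐ[R] B) :
    IsReductive (φ a) := by
  intro p hp hinv
  have hq : IsStarProjection (φ.symm p) :=
    ⟨hp.isIdempotentElem.map φ.symm, hp.isSelfAdjoint.map φ.symm⟩
  have hinv' : (1 - φ.symm p) * a * φ.symm p = 0 :=
    EquivLike.injective φ <| by
      rw [map_mul, map_mul, map_sub, map_one, φ.apply_symm_apply, hinv, map_zero]
  have := congrArg φ (ha _ hq hinv')
  rwa [map_mul, map_mul, map_sub, map_one, φ.apply_symm_apply, map_zero] at this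

variable {E : Type*} [NormedAddCommGroup E] [InnerProductSpace ℂ E]

theorem orthogonal_mem_invtSubmodule [CompleteSpace E]
    {a : E →L[ℂ] E} (ha : IsReductive a) {U : Submodule ℂ E} [U.HasOrthogonalProjection]
    (hU : U ∈ invtSubmodule (a : E →ₗ[ℂ] E)) : Uᗮ ∈ invtSubmodule (a : E →ₗ[ℂ] E) := by
  set p := U.starProjection
  have hp : IsIdempotentElem (p : E →ₗ[ℂ] E) :=
    ContinuousLinearMap.IsIdempotentElem.toLinearMap (isIdempotentElem_starProjection U)
  rw [← range_starProjection U, LinearMap.IsIdempotentElem.range_mem_invtSubmodule_iff hp] at hU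
  rw [← ker_starProjection U, LinearMap.IsIdempotentElem.ker_mem_invtSubmodule_iff hp]
  simp only [← Module.End.mul_eq_comp, ← ContinuousLinearMap.toLinearMap_mul,
    ContinuousLinearMap.coe_inj, ← mul_assoc] at hU ⊢
  have := ha p isStarProjection_starProjection (by rw [sub_mul, one_mul, sub_mul, hU, sub_self])
  rw [mul_sub, mul_one, sub_eq_zero] at this
  exact this.symm

theorem isStarNormal [FiniteDimensional ℂ E] {a : E →L[ℂ] E} (ha : IsReductive a) :
    IsStarNormal a := by
  have h := adjoint_mul_self_eq_mul_adjoint_of_orthogonal_mem_invtSubmodule fun U hU =>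
    ha.orthogonal_mem_invtSubmodule hU
  refine ⟨ContinuousLinearMap.coe_injective ?_⟩
  simpa [ContinuousLinearMap.star_eq_adjoint, ContinuousLinearMap.adjoint_toLinearMap] using h

end IsReductive

theorem opN_eq_zero_iff {n : ℕ} {M : Matrix (Fin n) (Fin n) ℂ} : opN M = 0 ↔ M = 0 := by
  rw [opN, norm_eq_zero, map_eq_zero_iff _ (EquivLike.injective _)]

theorem Matrix.rank_eq_zero_iff {m n K : Type*} [Fintype n] [Field K] {M : Matrix m n K} :
    M.rank = 0 ↔ M = 0 := by
  classical
  rw [rank, Submodule.finrank_eq_zero, LinearMap.range_eq_bot, ← toLin'_apply',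
    map_eq_zero_iff _ toLin'.injective]

theorem HasCN.isReductive {n : ℕ} {T : Matrix (Fin n) (Fin n) ℂ} (hT : HasCN T) : IsReductive T :=
  fun P hP hinv => opN_eq_zero_iff.mp <| by
    rw [hT P hP.isIdempotentElem.eq hP.isSelfAdjoint.star_eq, hinv, opN_eq_zero_iff]

theorem HasCR.isReductive {n : ℕ} {T : Matrix (Fin n) (Fin n) ℂ} (hT : HasCR T) : IsReductive T :=
  fun P hP hinv => rank_eq_zero_iff.mp <| by
    rw [hT P hP.isIdempotentElem.eq hP.isSelfAdjoint.star_eq, hinv, rank_zero]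

theorem stmt0_general {n : ℕ} (T : Matrix (Fin n) (Fin n) ℂ)
    (h : HasCN T ∨ HasCR T) : T * Tᴴ = Tᴴ * T := by
  have hT : IsReductive T := h.elim HasCN.isReductive HasCR.isReductive
  have hnormal := (hT.map (toEuclideanCLM (𝕜 := ℂ) (n := Fin n))).isStarNormal.star_comm_self
  apply EquivLike.injective (toEuclideanCLM (𝕜 := ℂ) (n := Fin n))
  rw [map_mul, map_mul, ← star_eq_conjTranspose, map_star]
  exact hnormal.symm

theorem stmt0 {n : ℕ} (hn : 2 ≤ n) (T : Matrix (Fin n) (Fin n) ℂ)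
    (h : HasCN T ∨ HasCR T) : T * Tᴴ = Tᴴ * T :=
  stmt0_general T h
end

section
/- Let T ∈ M₄(ℂ) be normal and invertible, with NE corner B and SW corner C, and let T⁻¹ have NE corner B' and SW corner C'. If rank B = rank C, then rank B' = rank C'; and if ‖B‖ = ‖C‖ (operator norms), then ‖B'‖ = ‖C'‖. -/
/-!
The rank identities hold for every invertible `T` (an instance of the nullity theorem): the
south-east block of `T⁻¹` maps `ker B'` injectively into `ker B`, with the south-east block of `T`
as a left inverse, and symmetrically; transposing handles `C` and `C'`.

For the norms, `‖A‖²` is the larger eigenvalue of `Aᴴ A` for a `2 × 2` matrix `A`, i.e. the larger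
root of `z² - tr (Aᴴ A) z + |det A|²`; hence given `tr (Aᴴ A)`, the quantities `‖A‖` and `|det A|`
determine each other. Comparing the north-west blocks of `T Tᴴ = Tᴴ T` gives
`tr (Bᴴ B) = tr (Cᴴ C)`, and likewise for the normal matrix `T⁻¹`. So `‖B‖ = ‖C‖` forces
`|det B| = |det C|`, Jacobi's complementary minor identity `det T · det B' = ± det B`,
`det T · det C' = ± det C` (same sign) transfers this to `|det B'| = |det C'|`, and hence
`‖B'‖ = ‖C'‖`.
-/

open Matrix

/-- The NE (north-east) 2×2 corner of a 4×4 matrix. -/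
def NE (T : Matrix (Fin 4) (Fin 4) ℂ) : Matrix (Fin 2) (Fin 2) ℂ :=
  ![![T 0 2, T 0 3], ![T 1 2, T 1 3]]

/-- The SW (south-west) 2×2 corner of a 4×4 matrix. -/
def SW (T : Matrix (Fin 4) (Fin 4) ℂ) : Matrix (Fin 2) (Fin 2) ℂ :=
  ![![T 2 0, T 2 1], ![T 3 0, T 3 1]]

namespace Matrix

section Blocks

variable {l m n o p q R : Type*} [Fintype m] [Fintype n] [CommRing R]

theorem toBlocks₁₁_mul (M : Matrix (l ⊕ o) (m ⊕ n) R) (N : Matrix (m ⊕ n) (p ⊕ q) R) :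
    (M * N).toBlocks₁₁ = M.toBlocks₁₁ * N.toBlocks₁₁ + M.toBlocks₁₂ * N.toBlocks₂₁ := by
  ext i j
  simp [toBlocks₁₁, toBlocks₁₂, toBlocks₂₁, mul_apply, Fintype.sum_sum_type]

theorem toBlocks₁₂_mul (M : Matrix (l ⊕ o) (m ⊕ n) R) (N : Matrix (m ⊕ n) (p ⊕ q) R) :
    (M * N).toBlocks₁₂ = M.toBlocks₁₁ * N.toBlocks₁₂ + M.toBlocks₁₂ * N.toBlocks₂₂ := by
  ext i j
  simp [toBlocks₁₁, toBlocks₁₂, toBlocks₂₂, mul_apply, Fintype.sum_sum_type]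

theorem toBlocks₂₁_mul (M : Matrix (l ⊕ o) (m ⊕ n) R) (N : Matrix (m ⊕ n) (p ⊕ q) R) :
    (M * N).toBlocks₂₁ = M.toBlocks₂₁ * N.toBlocks₁₁ + M.toBlocks₂₂ * N.toBlocks₂₁ := by
  ext i j
  simp [toBlocks₁₁, toBlocks₂₁, toBlocks₂₂, mul_apply, Fintype.sum_sum_type]

theorem toBlocks₂₂_mul (M : Matrix (l ⊕ o) (m ⊕ n) R) (N : Matrix (m ⊕ n) (p ⊕ q) R) :
    (M * N).toBlocks₂₂ = M.toBlocks₂₁ * N.toBlocks₁₂ + M.toBlocks₂₂ * N.toBlocks₂₂ := by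
  ext i j
  simp [toBlocks₂₁, toBlocks₁₂, toBlocks₂₂, mul_apply, Fintype.sum_sum_type]

end Blocks

section Rank

variable {m n K : Type*} [Fintype m] [Fintype n] [DecidableEq m] [DecidableEq n] [Field K]

theorem rank_toBlocks₁₂_le_of_mul_eq_one {M N : Matrix (m ⊕ n) (m ⊕ n) K} (h : M * N = 1) :
    M.toBlocks₁₂.rank ≤ N.toBlocks₁₂.rank := by
  have h₁₂ : M.toBlocks₁₁ * N.toBlocks₁₂ + M.toBlocks₁₂ * N.toBlocks₂₂ = 0 := by
    rw [← toBlocks₁₂_mul, h]; rfl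
  have h₂₂ : M.toBlocks₂₁ * N.toBlocks₁₂ + M.toBlocks₂₂ * N.toBlocks₂₂ = 1 := by
    rw [← toBlocks₂₂_mul, h]; ext i j; simp [toBlocks₂₂, one_apply]
  -- `N₂₂` maps `ker N₁₂` into `ker M₁₂`, and `M₂₂` is a left inverse of it there
  have hmaps : ∀ v ∈ LinearMap.ker N.toBlocks₁₂.mulVecLin,
      N.toBlocks₂₂.mulVecLin v ∈ LinearMap.ker M.toBlocks₁₂.mulVecLin := by
    intro v (hv : N.toBlocks₁₂ *ᵥ v = 0)
    simpa [hv, add_mulVec, ← mulVec_mulVec] using congrArg (· *ᵥ v) h₁₂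
  have hinj : Function.Injective (N.toBlocks₂₂.mulVecLin.restrict hmaps) := by
    intro v w hvw
    have hleft : ∀ u ∈ LinearMap.ker N.toBlocks₁₂.mulVecLin,
        M.toBlocks₂₂ *ᵥ N.toBlocks₂₂ *ᵥ u = u := fun u (hu : N.toBlocks₁₂ *ᵥ u = 0) => by
      simpa [hu, add_mulVec, ← mulVec_mulVec] using congrArg (· *ᵥ u) h₂₂
    have hvw' : N.toBlocks₂₂ *ᵥ v.1 = N.toBlocks₂₂ *ᵥ w.1 := congrArg Subtype.val hvw
    exact Subtype.ext <| by rw [← hleft v v.2, ← hleft w w.2, hvw']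
  have hker := LinearMap.finrank_le_finrank_of_injective hinj
  have hM := LinearMap.finrank_range_add_finrank_ker M.toBlocks₁₂.mulVecLin
  have hN := LinearMap.finrank_range_add_finrank_ker N.toBlocks₁₂.mulVecLin
  unfold rank
  omega

theorem rank_inv_toBlocks₁₂ {M : Matrix (m ⊕ n) (m ⊕ n) K} (hM : IsUnit M.det) :
    (M⁻¹).toBlocks₁₂.rank = M.toBlocks₁₂.rank :=
  le_antisymm (rank_toBlocks₁₂_le_of_mul_eq_one (nonsing_inv_mul M hM))
    (rank_toBlocks₁₂_le_of_mul_eq_one (mul_nonsing_inv M hM))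

theorem rank_inv_toBlocks₂₁ {M : Matrix (m ⊕ n) (m ⊕ n) K} (hM : IsUnit M.det) :
    (M⁻¹).toBlocks₂₁.rank = M.toBlocks₂₁.rank :=
  calc (M⁻¹).toBlocks₂₁.rank = ((Mᵀ)⁻¹).toBlocks₁₂.rank := by
        rw [← transpose_nonsing_inv, ← rank_transpose]; rfl
    _ = Mᵀ.toBlocks₁₂.rank := rank_inv_toBlocks₁₂ (by rwa [det_transpose])
    _ = M.toBlocks₂₁.rank := rank_transpose _

end Rank

section Determinant

variable {m n K : Type*} [Fintype m] [Fintype n] [DecidableEq m] [DecidableEq n] [Field K]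

theorem det_mul_det_toBlocks₂₂_of_mul_eq_one {M N : Matrix (m ⊕ n) (m ⊕ n) K}
    (h : M * N = 1) : M.det * N.toBlocks₂₂.det = M.toBlocks₁₁.det := by
  have hprod : M * fromBlocks 1 N.toBlocks₁₂ 0 N.toBlocks₂₂ =
      fromBlocks M.toBlocks₁₁ 0 M.toBlocks₂₁ 1 := by
    conv_lhs => rw [← fromBlocks_toBlocks M]
    rw [fromBlocks_multiply, ← toBlocks₁₂_mul, ← toBlocks₂₂_mul, h]
    congr 1 <;> ext i j <;> simp [toBlocks₁₂, toBlocks₂₂, one_apply]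
  simpa [det_fromBlocks_zero₂₁, det_fromBlocks_zero₁₂] using congrArg det hprod

theorem det_mul_det_toBlocks₁₁_of_mul_eq_one {M N : Matrix (m ⊕ n) (m ⊕ n) K}
    (h : M * N = 1) : M.det * N.toBlocks₁₁.det = M.toBlocks₂₂.det := by
  have hprod : M * fromBlocks N.toBlocks₁₁ 0 N.toBlocks₂₁ 1 =
      fromBlocks 1 M.toBlocks₁₂ 0 M.toBlocks₂₂ := by
    conv_lhs => rw [← fromBlocks_toBlocks M]
    rw [fromBlocks_multiply, ← toBlocks₁₁_mul, ← toBlocks₂₁_mul, h]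
    congr 1 <;> ext i j <;> simp [toBlocks₁₁, toBlocks₂₁, one_apply]
  simpa [det_fromBlocks_zero₂₁, det_fromBlocks_zero₁₂] using congrArg det hprod

theorem sign_mul_det_mul_det_inv_toBlocks₁₂ {M : Matrix (n ⊕ n) (n ⊕ n) K} (hM : IsUnit M.det) :
    (Equiv.Perm.sign (Equiv.sumComm n n) : K) * M.det * (M⁻¹).toBlocks₁₂.det =
      M.toBlocks₁₂.det := by
  have h : M.submatrix id (Equiv.sumComm n n) * (M⁻¹).submatrix (Equiv.sumComm n n) id = 1 := by
    rw [submatrix_mul_equiv, submatrix_id_id, mul_nonsing_inv M hM]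
  rw [← det_permute']
  exact det_mul_det_toBlocks₂₂_of_mul_eq_one h

theorem sign_mul_det_mul_det_inv_toBlocks₂₁ {M : Matrix (n ⊕ n) (n ⊕ n) K} (hM : IsUnit M.det) :
    (Equiv.Perm.sign (Equiv.sumComm n n) : K) * M.det * (M⁻¹).toBlocks₂₁.det =
      M.toBlocks₂₁.det := by
  have h : M.submatrix id (Equiv.sumComm n n) * (M⁻¹).submatrix (Equiv.sumComm n n) id = 1 := by
    rw [submatrix_mul_equiv, submatrix_id_id, mul_nonsing_inv M hM]
  rw [← det_permute']
  exact det_mul_det_toBlocks₁₁_of_mul_eq_one h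

theorem norm_det_inv_toBlocks₁₂_eq_of_norm_det_toBlocks₁₂_eq {𝕜 : Type*} [NormedField 𝕜]
    {M : Matrix (n ⊕ n) (n ⊕ n) 𝕜} (hM : IsUnit M.det)
    (h : ‖M.toBlocks₁₂.det‖ = ‖M.toBlocks₂₁.det‖) :
    ‖(M⁻¹).toBlocks₁₂.det‖ = ‖(M⁻¹).toBlocks₂₁.det‖ := by
  have hc : (Equiv.Perm.sign (Equiv.sumComm n n) : 𝕜) * M.det ≠ 0 :=
    (((Units.isUnit _).map (Int.castRingHom 𝕜)).mul hM).ne_zero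
  rw [← sign_mul_det_mul_det_inv_toBlocks₁₂ hM, ← sign_mul_det_mul_det_inv_toBlocks₂₁ hM,
    norm_mul _ (toBlocks₁₂ _).det, norm_mul _ (toBlocks₂₁ _).det] at h
  exact mul_left_cancel₀ (norm_ne_zero_iff.mpr hc) h

end Determinant

section Normal

variable {m n R : Type*} [Fintype m] [Fintype n] [CommRing R] [StarRing R]

theorem trace_conjTranspose_mul_self_toBlocks₁₂_eq {M : Matrix (m ⊕ n) (m ⊕ n) R}
    (h : M * Mᴴ = Mᴴ * M) :
    (M.toBlocks₁₂ᴴ * M.toBlocks₁₂).trace = (M.toBlocks₂₁ᴴ * M.toBlocks₂₁).trace := by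
  have h₁₁ := congrArg (fun A => (toBlocks₁₁ A).trace) h
  have hc₁₁ : Mᴴ.toBlocks₁₁ = M.toBlocks₁₁ᴴ := rfl
  have hc₁₂ : Mᴴ.toBlocks₁₂ = M.toBlocks₂₁ᴴ := rfl
  have hc₂₁ : Mᴴ.toBlocks₂₁ = M.toBlocks₁₂ᴴ := rfl
  simp only [toBlocks₁₁_mul, trace_add, hc₁₁, hc₁₂, hc₂₁, trace_mul_comm M.toBlocks₁₁] at h₁₁
  rw [trace_mul_comm, add_left_cancel h₁₁]

theorem mul_conjTranspose_comm_inv [DecidableEq n] {A : Matrix n n R} (h : A * Aᴴ = Aᴴ * A) :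
    A⁻¹ * A⁻¹ᴴ = A⁻¹ᴴ * A⁻¹ := by
  rw [conjTranspose_nonsing_inv, ← mul_inv_rev, ← mul_inv_rev, h]

end Normal

theorem mem_spectrum_iff_fin_two {K : Type*} [Field K] (A : Matrix (Fin 2) (Fin 2) K)
    {z : K} : z ∈ spectrum K A ↔ z ^ 2 - A.trace * z + A.det = 0 := by
  simp [mem_spectrum_iff_isRoot_charpoly, charpoly_fin_two]

theorem det_conjTranspose_mul_self_eq_norm_sq {n : Type*} [Fintype n] [DecidableEq n]
    (A : Matrix n n ℂ) : (Aᴴ * A).det = ((‖A.det‖ ^ 2 : ℝ) : ℂ) := by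
  rw [det_mul, det_conjTranspose, Complex.star_def, Complex.conj_mul']
  push_cast; rfl

end Matrix

section OpNorm

variable {n : ℕ}

theorem opN_nonneg (M : Matrix (Fin n) (Fin n) ℂ) : 0 ≤ opN M := norm_nonneg _

theorem norm_star_mul_self_toEuclideanCLM (M : Matrix (Fin n) (Fin n) ℂ) :
    ‖star (toEuclideanCLM (𝕜 := ℂ) M) * toEuclideanCLM (𝕜 := ℂ) M‖ = opN M ^ 2 := by
  rw [ContinuousLinearMap.star_eq_adjoint, sq]
  exact ContinuousLinearMap.norm_adjoint_comp_self _

theorem spectrum_conjTranspose_mul_self_eq (M : Matrix (Fin n) (Fin n) ℂ) :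
    spectrum ℂ (Mᴴ * M) =
      spectrum ℂ (star (toEuclideanCLM (𝕜 := ℂ) M) * toEuclideanCLM (𝕜 := ℂ) M) := by
  rw [← map_star, ← map_mul, star_eq_conjTranspose, AlgEquiv.spectrum_eq]

theorem opN_sq_mem_spectrum [NeZero n] (M : Matrix (Fin n) (Fin n) ℂ) :
    ((opN M ^ 2 : ℝ) : ℂ) ∈ spectrum ℂ (Mᴴ * M) := by
  have hpos : 0 ≤ star (toEuclideanCLM (𝕜 := ℂ) M) * toEuclideanCLM (𝕜 := ℂ) M :=
    star_mul_self_nonneg _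
  have hmem :=
    (spectrum.algebraMap_mem_iff ℂ).mpr (CStarAlgebra.norm_mem_spectrum_of_nonneg hpos)
  rwa [norm_star_mul_self_toEuclideanCLM, ← spectrum_conjTranspose_mul_self_eq] at hmem

theorem norm_le_opN_sq_of_mem_spectrum [NeZero n] {M : Matrix (Fin n) (Fin n) ℂ} {z : ℂ}
    (hz : z ∈ spectrum ℂ (Mᴴ * M)) : ‖z‖ ≤ opN M ^ 2 := by
  rw [spectrum_conjTranspose_mul_self_eq] at hz
  exact norm_star_mul_self_toEuclideanCLM M ▸ spectrum.norm_le_norm_of_mem hz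

end OpNorm

section FinTwo

-- if `x ≠ y` then `x + y = f` (Vieta), so `‖y‖ ≤ x` and `‖x‖ ≤ y`
theorem eq_of_quadratic_eq_zero_of_norm_sub_le {f d : ℂ} {x y : ℝ}
    (hx : (x : ℂ) ^ 2 - f * x + d = 0) (hy : (y : ℂ) ^ 2 - f * y + d = 0)
    (hx' : ‖f - x‖ ≤ x) (hy' : ‖f - y‖ ≤ y) : x = y := by
  have hprod : ((x : ℂ) - y) * (x + y - f) = 0 := by linear_combination hx - hy
  rcases mul_eq_zero.mp hprod with h | h
  · exact_mod_cast sub_eq_zero.mp h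
  · rw [show f - x = y by linear_combination -h, Complex.norm_real, Real.norm_eq_abs] at hx'
    rw [show f - y = x by linear_combination -h, Complex.norm_real, Real.norm_eq_abs] at hy'
    linarith [le_abs_self x, le_abs_self y, abs_nonneg x, abs_nonneg y]

theorem quadratic_opN_sq_eq_zero (M : Matrix (Fin 2) (Fin 2) ℂ) :
    ((opN M ^ 2 : ℝ) : ℂ) ^ 2 - (Mᴴ * M).trace * (opN M ^ 2 : ℝ) + (‖M.det‖ ^ 2 : ℝ) = 0 := by
  rw [← det_conjTranspose_mul_self_eq_norm_sq, ← mem_spectrum_iff_fin_two]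
  exact opN_sq_mem_spectrum M

-- `tr (Mᴴ M) - ‖M‖²` is the other eigenvalue of `Mᴴ M`
theorem norm_trace_sub_opN_sq_le (M : Matrix (Fin 2) (Fin 2) ℂ) :
    ‖(Mᴴ * M).trace - (opN M ^ 2 : ℝ)‖ ≤ opN M ^ 2 := by
  apply norm_le_opN_sq_of_mem_spectrum
  rw [mem_spectrum_iff_fin_two, det_conjTranspose_mul_self_eq_norm_sq]
  linear_combination quadratic_opN_sq_eq_zero M

theorem opN_eq_of_trace_eq_of_norm_det_eq {M N : Matrix (Fin 2) (Fin 2) ℂ}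
    (htr : (Mᴴ * M).trace = (Nᴴ * N).trace) (hdet : ‖M.det‖ = ‖N.det‖) : opN M = opN N := by
  have hM := quadratic_opN_sq_eq_zero M
  have hM' := norm_trace_sub_opN_sq_le M
  rw [htr, hdet] at hM
  rw [htr] at hM'
  have hsq := eq_of_quadratic_eq_zero_of_norm_sub_le hM (quadratic_opN_sq_eq_zero N) hM'
    (norm_trace_sub_opN_sq_le N)
  exact (pow_left_inj₀ (opN_nonneg M) (opN_nonneg N) two_ne_zero).mp hsq

theorem norm_det_eq_of_opN_eq_of_trace_eq {M N : Matrix (Fin 2) (Fin 2) ℂ}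
    (htr : (Mᴴ * M).trace = (Nᴴ * N).trace) (hop : opN M = opN N) : ‖M.det‖ = ‖N.det‖ := by
  have hM := quadratic_opN_sq_eq_zero M
  rw [htr, hop] at hM
  have hsq : ((‖M.det‖ ^ 2 : ℝ) : ℂ) = (‖N.det‖ ^ 2 : ℝ) := by
    linear_combination hM - quadratic_opN_sq_eq_zero N
  exact (pow_left_inj₀ (norm_nonneg _) (norm_nonneg _) two_ne_zero).mp (by exact_mod_cast hsq)

end FinTwo

theorem opN_inv_toBlocks₁₂_eq {M : Matrix (Fin 2 ⊕ Fin 2) (Fin 2 ⊕ Fin 2) ℂ}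
    (hnormal : M * Mᴴ = Mᴴ * M) (hM : IsUnit M.det)
    (hop : opN M.toBlocks₁₂ = opN M.toBlocks₂₁) :
    opN (M⁻¹).toBlocks₁₂ = opN (M⁻¹).toBlocks₂₁ :=
  opN_eq_of_trace_eq_of_norm_det_eq
    (trace_conjTranspose_mul_self_toBlocks₁₂_eq (mul_conjTranspose_comm_inv hnormal))
    (norm_det_inv_toBlocks₁₂_eq_of_norm_det_toBlocks₁₂_eq hM
      (norm_det_eq_of_opN_eq_of_trace_eq
        (trace_conjTranspose_mul_self_toBlocks₁₂_eq hnormal) hop))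

abbrev blockForm (T : Matrix (Fin 4) (Fin 4) ℂ) : Matrix (Fin 2 ⊕ Fin 2) (Fin 2 ⊕ Fin 2) ℂ :=
  T.submatrix finSumFinEquiv finSumFinEquiv

theorem blockForm_toBlocks₁₂ (T : Matrix (Fin 4) (Fin 4) ℂ) :
    (blockForm T).toBlocks₁₂ = NE T := by
  ext i j; fin_cases i <;> fin_cases j <;> rfl

theorem blockForm_toBlocks₂₁ (T : Matrix (Fin 4) (Fin 4) ℂ) :
    (blockForm T).toBlocks₂₁ = SW T := by
  ext i j; fin_cases i <;> fin_cases j <;> rfl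

theorem stmt5 (T : Matrix (Fin 4) (Fin 4) ℂ)
    (hnormal : T * Tᴴ = Tᴴ * T) (hinv : IsUnit T) :
    ((NE T).rank = (SW T).rank → (NE T⁻¹).rank = (SW T⁻¹).rank) ∧
    (opN (NE T) = opN (SW T) → opN (NE T⁻¹) = opN (SW T⁻¹)) := by
  have hM : IsUnit (blockForm T).det := by
    rwa [det_submatrix_equiv_self, ← isUnit_iff_isUnit_det]
  have hnormalM : blockForm T * (blockForm T)ᴴ = (blockForm T)ᴴ * blockForm T := by
    rw [conjTranspose_submatrix, submatrix_mul_equiv, submatrix_mul_equiv, hnormal]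
  have hinvM : blockForm T⁻¹ = (blockForm T)⁻¹ := (inv_submatrix_equiv _ _ _).symm
  rw [← blockForm_toBlocks₁₂, ← blockForm_toBlocks₂₁, ← blockForm_toBlocks₁₂ T⁻¹,
    ← blockForm_toBlocks₂₁ T⁻¹, hinvM]
  exact ⟨fun h => by rwa [rank_inv_toBlocks₁₂ hM, rank_inv_toBlocks₂₁ hM],
    opN_inv_toBlocks₁₂_eq hnormalM hM⟩
end

section
/- Let H be a complex Hilbert space, let T be a bounded linear operator on H, let m be a natural number, and suppose that 2·m is strictly less than the Hilbert-space dimension of H (as cardinals; in particular this holds whenever H is infinite-dimensional). If there exist α, β, γ ∈ ℂ, not all zero, and a bounded operator F on H of rank at most m such that α·1 + β·T + γ·T† + F = 0, then there exist a selfadjoint bounded operator R on H, a bounded operator L on H of rank at most 2·m, and λ, μ ∈ ℂ such that T = λ·(R + L) + μ·1. -/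
open ContinuousLinearMap

lemma my_rank_smul_le {H : Type*} [NormedAddCommGroup H] [InnerProductSpace ℂ H]
    (c : ℂ) (f : H →ₗ[ℂ] H) : LinearMap.rank (c • f) ≤ LinearMap.rank f := by
  apply Submodule.rank_mono
  rintro _ ⟨x, rfl⟩
  exact ⟨c • x, by simp⟩

theorem stmt14 {H : Type*} [NormedAddCommGroup H] [InnerProductSpace ℂ H]
    [CompleteSpace H] (T : H →L[ℂ] H) (m : ℕ)
    (hdim : 2 * (m : Cardinal) < Module.rank ℂ H)
    (α β γ : ℂ) (hne : ¬ (α = 0 ∧ β = 0 ∧ γ = 0))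
    (F : H →L[ℂ] H) (hF : LinearMap.rank ((F : H →L[ℂ] H) : H →ₗ[ℂ] H) ≤ (m : Cardinal))
    (heq : α • (1 : H →L[ℂ] H) + β • T + γ • ContinuousLinearMap.adjoint T + F = 0) :
    ∃ (R L : H →L[ℂ] H) (fl mu : ℂ),
      ContinuousLinearMap.adjoint R = R ∧
      LinearMap.rank ((L : H →L[ℂ] H) : H →ₗ[ℂ] H) ≤ (2 * m : ℕ) ∧
      T = fl • (R + L) + mu • 1 := by
  have hm2 : (m : Cardinal) ≤ ((2 * m : ℕ) : Cardinal) := by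
    push_cast
    calc (m : Cardinal) = 1 * m := (one_mul _).symm
      _ ≤ 2 * m := by gcongr; exact one_le_two
  have hrankL : ∀ c : ℂ, LinearMap.rank (((c • F : H →L[ℂ] H)) : H →ₗ[ℂ] H) ≤ ((2 * m : ℕ) : Cardinal) := by
    intro c
    have hcoe : ((c • F : H →L[ℂ] H) : H →ₗ[ℂ] H) = c • ((F : H →L[ℂ] H) : H →ₗ[ℂ] H) := rfl
    rw [hcoe]
    exact ((my_rank_smul_le _ _).trans hF).trans hm2
  by_cases hg0 : γ = 0
  · by_cases hb : β = 0
    · -- contradiction case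
      exfalso
      have hα : α ≠ 0 := fun h => hne ⟨h, hb, hg0⟩
      rw [hb, hg0, zero_smul, zero_smul, add_zero, add_zero] at heq
      have hα1 : α • (1 : H →L[ℂ] H) = -F := by
        rw [eq_neg_iff_add_eq_zero]; exact heq
      have h1 : (1 : H →L[ℂ] H) = (-α⁻¹) • F := by
        calc (1 : H →L[ℂ] H) = α⁻¹ • (α • (1 : H →L[ℂ] H)) := by
              rw [smul_smul, inv_mul_cancel₀ hα, one_smul]
          _ = α⁻¹ • (-F) := by rw [hα1]
          _ = (-α⁻¹) • F := by rw [smul_neg, neg_smul]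
      have hrank1 : Module.rank ℂ H ≤ (m : Cardinal) := by
        have h2 := (my_rank_smul_le (-α⁻¹) ((F : H →L[ℂ] H) : H →ₗ[ℂ] H)).trans hF
        have hcoe : (((-α⁻¹) • F : H →L[ℂ] H) : H →ₗ[ℂ] H)
            = (-α⁻¹) • ((F : H →L[ℂ] H) : H →ₗ[ℂ] H) := rfl
        rw [← hcoe, ← h1] at h2
        have hid : LinearMap.rank (((1 : H →L[ℂ] H)) : H →ₗ[ℂ] H) = Module.rank ℂ H := by
          have hco : (((1 : H →L[ℂ] H)) : H →ₗ[ℂ] H) = LinearMap.id := rfl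
          rw [hco, LinearMap.rank, LinearMap.range_id, rank_top]
        rwa [hid] at h2
      have hm2' : (m : Cardinal) ≤ 2 * m := le_trans hm2 (by push_cast; rfl)
      exact lt_irrefl _ (lt_of_le_of_lt (hrank1.trans hm2') hdim)
    · -- β ≠ 0, γ = 0 : T = -(α/β)•1 - β⁻¹ • F
      rw [hg0, zero_smul, add_zero] at heq
      have hT : β • T = -(α • (1 : H →L[ℂ] H)) - F := by
        rw [eq_sub_iff_add_eq, eq_neg_iff_add_eq_zero]
        linear_combination (norm := module) heq
      refine ⟨0, (-β⁻¹) • F, 1, -α/β, by simp, hrankL _, ?_⟩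
      have hTT : T = β⁻¹ • (β • T) := by
        rw [smul_smul, inv_mul_cancel₀ hb, one_smul]
      rw [hTT, hT]
      match_scalars <;> field_simp
  · -- γ ≠ 0
    obtain ⟨a, b, hb, hsb, he⟩ : ∃ a b : ℂ, star a = b ∧ star b = a ∧ a * γ - b * β ≠ 0 := by
      by_cases hgb : γ = β
      · exact ⟨Complex.I, -Complex.I, by simp [Complex.star_def, Complex.conj_I],
          by simp [Complex.star_def, Complex.conj_I], by
            rw [hgb]
            intro h
            have h2 : (2 * Complex.I) * β = 0 := by linear_combination h
            rcases mul_eq_zero.mp h2 with h3 | h3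
            · norm_num [Complex.ext_iff] at h3
            · exact hg0 (hgb ▸ h3)⟩
      · exact ⟨1, 1, by simp, by simp, by
          simpa [sub_ne_zero] using fun h => hgb ((one_mul γ) ▸ (one_mul β) ▸ h)⟩
    have hadj : adjoint T = γ⁻¹ • (-(α • (1 : H →L[ℂ] H)) - β • T - F) := by
      have h1 : γ • adjoint T = -(α • (1 : H →L[ℂ] H)) - β • T - F := by
        rw [eq_sub_iff_add_eq, eq_sub_iff_add_eq, eq_neg_iff_add_eq_zero]
        linear_combination (norm := module) heq
      rw [← h1, smul_smul, inv_mul_cancel₀ hg0, one_smul]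
    refine ⟨a • T + b • adjoint T, (γ⁻¹ * b) • F, (a * γ - b * β)⁻¹ * γ,
        (a * γ - b * β)⁻¹ * b * α, ?_, hrankL _, ?_⟩
    · simp only [map_add, map_smulₛₗ, adjoint_adjoint, RingHom.coe_coe, starRingEnd_apply, hb, hsb]
      module
    · rw [hadj]
      match_scalars <;> field_simp <;> ring
end
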